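/- Let T*, C be independent nonnegative random variables, Δ valued in {1,...,K} with (T*,Δ) ⊥ C, T = min(T*, C), observed label Δ̃ = Δ·1{T* ≤ C}. Assume G*(t) = P(C ≥ t) > 0 for all t in [0, ζ] and G*(ζ⁺) convention handled, i.e., assume P(C ≥ t) = P(C > t) for all t (C atomless). Define for estimates p_1,...,p_K, s ∈ (0,1) with Σp_k + s = 1 the weighted log score L = Σ_{k=1}^K [1{T ≤ ζ, Δ̃ = k}·log(p_k)/G*(T)] + 1{T > ζ}·log(s)/G*(ζ). Then E[L] = Σ_{k=1}^K log(p_k)·F*_k(ζ) + log(s)·S*(ζ), where F*_k(ζ) = P(T* ≤ ζ ∧ Δ = k) and S*(ζ) = P(T* > ζ). -/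

import Mathlib

open MeasureTheory Finset

open Classical in
theorem stmt_11 {Ω : Type*} [MeasurableSpace Ω] (μ : Measure Ω) [IsProbabilityMeasure μ]
    (K : ℕ) (Tstar C : Ω → ℝ) (Δ : Ω → ℕ)
    (hT : Measurable Tstar) (hC : Measurable C) (hΔ : Measurable Δ)
    (hTpos : ∀ ω, 0 ≤ Tstar ω) (hCpos : ∀ ω, 0 ≤ C ω)
    (hΔrange : ∀ ω, Δ ω ∈ Finset.Icc 1 K)
    (hindep : ProbabilityTheory.IndepFun (fun ω => (Tstar ω, Δ ω)) C μ)
    (T : Ω → ℝ) (hTdef : ∀ ω, T ω = min (Tstar ω) (C ω))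
    (Δobs : Ω → ℕ) (hΔobs : ∀ ω, Δobs ω = if Tstar ω ≤ C ω then Δ ω else 0)
    (G : ℝ → ℝ) (hG : ∀ t, G t = (μ {ω | t ≤ C ω}).toReal)
    (hnoatom : ∀ t : ℝ, μ {ω | t ≤ C ω} = μ {ω | t < C ω})
    (ζ : ℝ) (hζ : 0 ≤ ζ) (hGpos : ∀ t ∈ Set.Icc 0 ζ, 0 < G t)
    (p : ℕ → ℝ) (s : ℝ)
    (hp : ∀ k ∈ Finset.Icc 1 K, 0 < p k) (hs : 0 < s)
    (hsum : ∑ k ∈ Finset.Icc 1 K, p k + s = 1) :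
    ∫ ω, (∑ k ∈ Finset.Icc 1 K,
            (if T ω ≤ ζ ∧ Δobs ω = k then Real.log (p k) / G (T ω) else 0))
          + (if ζ < T ω then Real.log s / G ζ else 0) ∂μ
      = ∑ k ∈ Finset.Icc 1 K,
          Real.log (p k) * (μ {ω | Tstar ω ≤ ζ ∧ Δ ω = k}).toReal
        + Real.log s * (μ {ω | ζ < Tstar ω}).toReal := by
  have hGζ : 0 < G ζ := hGpos ζ ⟨hζ, le_rfl⟩
  have hGanti : Antitone G := by
    intro a b hab
    rw [hG, hG]
    exact ENNReal.toReal_mono (measure_ne_top μ _)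
      (measure_mono (fun ω h => le_trans hab h))
  have hGmeas : Measurable G := hGanti.measurable
  have hGposle : ∀ t : ℝ, t ≤ ζ → 0 < G t := fun t ht => lt_of_lt_of_le hGζ (hGanti ht)
  have hTm : Measurable T := by
    have : T = fun ω => min (Tstar ω) (C ω) := funext hTdef
    rw [this]; exact hT.min hC
  have hΔobsm : Measurable Δobs := by
    have : Δobs = fun ω => if Tstar ω ≤ C ω then Δ ω else 0 := funext hΔobs
    rw [this]; exact Measurable.ite (measurableSet_le hT hC) hΔ measurable_const
  set X : Ω → ℝ × ℕ := fun ω => (Tstar ω, Δ ω) with hXdef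
  have hX : Measurable X := hT.prodMk hΔ
  haveI h1 : IsProbabilityMeasure (μ.map X) := Measure.isProbabilityMeasure_map hX.aemeasurable
  haveI h2 : IsProbabilityMeasure (μ.map C) := Measure.isProbabilityMeasure_map hC.aemeasurable
  have hmap : μ.map (fun ω => (X ω, C ω)) = (μ.map X).prod (μ.map C) :=
    (ProbabilityTheory.indepFun_iff_map_prod_eq_prod_map_map hX.aemeasurable
      hC.aemeasurable).mp hindep
  -- general change of variables + Fubini
  have key : ∀ (Φ : (ℝ × ℕ) × ℝ → ℝ) (B : ℝ), Measurable Φ → (∀ z, |Φ z| ≤ B) →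
      ∫ ω, Φ (X ω, C ω) ∂μ = ∫ x, ∫ y, Φ (x, y) ∂(μ.map C) ∂(μ.map X) := by
    intro Φ B hΦ hB
    have hint : Integrable Φ ((μ.map X).prod (μ.map C)) := by
      refine (integrable_const B).mono' hΦ.aestronglyMeasurable ?_
      exact Filter.Eventually.of_forall (fun z => by simpa using hB z)
    calc ∫ ω, Φ (X ω, C ω) ∂μ
        = ∫ z, Φ z ∂(μ.map (fun ω => (X ω, C ω))) :=
          (integral_map (hX.prodMk hC).aemeasurable hΦ.aestronglyMeasurable).symm
      _ = ∫ z, Φ z ∂((μ.map X).prod (μ.map C)) := by rw [hmap]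
      _ = ∫ x, ∫ y, Φ (x, y) ∂(μ.map C) ∂(μ.map X) := integral_prod Φ hint
  -- inner integral helpers
  have inner_le : ∀ (c t : ℝ) (f : ℝ → ℝ), (∀ y, f y = c * (if t ≤ y then (1:ℝ) else 0)) →
      ∫ y, f y ∂(μ.map C) = c * G t := by
    intro c t f hf
    have he : f = fun y => c * (Set.Ici t).indicator 1 y := by
      funext y
      rw [hf y]
      by_cases h : t ≤ y <;> simp [Set.indicator_apply, h]
    rw [he, integral_const_mul, integral_indicator_one measurableSet_Ici,
      Measure.real, Measure.map_apply hC measurableSet_Ici, hG]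
    rfl
  have inner_lt : ∀ (c : ℝ) (f : ℝ → ℝ), (∀ y, f y = c * (if ζ < y then (1:ℝ) else 0)) →
      ∫ y, f y ∂(μ.map C) = c * G ζ := by
    intro c f hf
    have he : f = fun y => c * (Set.Ioi ζ).indicator 1 y := by
      funext y
      rw [hf y]
      by_cases h : ζ < y <;> simp [Set.indicator_apply, h]
    rw [he, integral_const_mul, integral_indicator_one measurableSet_Ioi,
      Measure.real, Measure.map_apply hC measurableSet_Ioi,
      show C ⁻¹' Set.Ioi ζ = {ω | ζ < C ω} from rfl, ← hnoatom ζ, hG]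
  -- the k-th term
  have term_k : ∀ k ∈ Finset.Icc 1 K,
      ∫ ω, (if T ω ≤ ζ ∧ Δobs ω = k then Real.log (p k) / G (T ω) else 0) ∂μ
        = Real.log (p k) * (μ {ω | Tstar ω ≤ ζ ∧ Δ ω = k}).toReal := by
    intro k hk
    have hk1 : 1 ≤ k := (Finset.mem_Icc.mp hk).1
    set Φ : (ℝ × ℕ) × ℝ → ℝ := fun z =>
      (if z.1.1 ≤ ζ ∧ z.1.2 = k then Real.log (p k) / G z.1.1 else 0) *
      (if z.1.1 ≤ z.2 then (1:ℝ) else 0) with hΦdef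
    have hSk : MeasurableSet {x : ℝ × ℕ | x.1 ≤ ζ ∧ x.2 = k} :=
      (measurableSet_le measurable_fst measurable_const).inter
        (measurable_snd (MeasurableSet.singleton k))
    have hΦmeas : Measurable Φ := by
      apply Measurable.mul
      · apply Measurable.ite
        · exact ((measurableSet_le (measurable_fst.comp measurable_fst) measurable_const)).inter
            ((measurable_snd.comp measurable_fst) (MeasurableSet.singleton k))
        · exact (measurable_const.div (hGmeas.comp (measurable_fst.comp measurable_fst)))
        · exact measurable_const
      · exact Measurable.ite (measurableSet_le (measurable_fst.comp measurable_fst)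
          measurable_snd) measurable_const measurable_const
    have hΦbd : ∀ z, |Φ z| ≤ |Real.log (p k)| / G ζ := by
      intro z
      simp only [hΦdef]
      by_cases h1 : z.1.1 ≤ ζ ∧ z.1.2 = k
      · have hGz : 0 < G z.1.1 := hGposle _ h1.1
        rw [if_pos h1]
        by_cases h2 : z.1.1 ≤ z.2
        · rw [if_pos h2, mul_one, abs_div, abs_of_pos hGz]
          exact div_le_div_of_nonneg_left (abs_nonneg _) hGζ (hGanti h1.1)
        · rw [if_neg h2, mul_zero, abs_zero]
          positivity
      · rw [if_neg h1, zero_mul, abs_zero]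
        positivity
    have hpt : ∀ ω, (if T ω ≤ ζ ∧ Δobs ω = k then Real.log (p k) / G (T ω) else 0)
        = Φ (X ω, C ω) := by
      intro ω
      simp only [hΦdef]
      by_cases h : Tstar ω ≤ C ω
      · have hT' : T ω = Tstar ω := by rw [hTdef]; exact min_eq_left h
        have hΔ' : Δobs ω = Δ ω := by rw [hΔobs, if_pos h]
        rw [if_pos h, mul_one, hT', hΔ']
      · have hne : Δobs ω ≠ k := by rw [hΔobs, if_neg h]; omega
        rw [if_neg h, mul_zero, if_neg (fun hc => hne hc.2)]
    calc ∫ ω, (if T ω ≤ ζ ∧ Δobs ω = k then Real.log (p k) / G (T ω) else 0) ∂μ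
        = ∫ ω, Φ (X ω, C ω) ∂μ := by
          congr 1; funext ω; exact hpt ω
      _ = ∫ x, ∫ y, Φ (x, y) ∂(μ.map C) ∂(μ.map X) := key Φ _ hΦmeas hΦbd
      _ = ∫ x, (if x.1 ≤ ζ ∧ x.2 = k then Real.log (p k) / G x.1 else 0) * G x.1
            ∂(μ.map X) := by
          congr 1; funext x; exact inner_le _ x.1 _ (fun y => rfl)
      _ = ∫ x, ({x : ℝ × ℕ | x.1 ≤ ζ ∧ x.2 = k}).indicator
            (fun _ => Real.log (p k)) x ∂(μ.map X) := by
          congr 1; funext x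
          by_cases h : x.1 ≤ ζ ∧ x.2 = k
          · have hGx : G x.1 ≠ 0 := (hGposle _ h.1).ne'
            have hm : x ∈ {x : ℝ × ℕ | x.1 ≤ ζ ∧ x.2 = k} := h
            rw [if_pos h, div_mul_cancel₀ _ hGx]
            exact (Set.indicator_of_mem hm (fun _ => Real.log (p k))).symm
          · have hm : x ∉ {x : ℝ × ℕ | x.1 ≤ ζ ∧ x.2 = k} := h
            rw [if_neg h, zero_mul]
            exact (Set.indicator_of_notMem hm (fun _ => Real.log (p k))).symm
      _ = Real.log (p k) * ((μ.map X) {x : ℝ × ℕ | x.1 ≤ ζ ∧ x.2 = k}).toReal := by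
          rw [integral_indicator_const _ hSk, smul_eq_mul, mul_comm]
          rfl
      _ = Real.log (p k) * (μ {ω | Tstar ω ≤ ζ ∧ Δ ω = k}).toReal := by
          rw [Measure.map_apply hX hSk]
          rfl
  -- the last term
  have hSl : MeasurableSet {x : ℝ × ℕ | ζ < x.1} :=
    measurableSet_lt measurable_const measurable_fst
  have term_s : ∫ ω, (if ζ < T ω then Real.log s / G ζ else 0) ∂μ
      = Real.log s * (μ {ω | ζ < Tstar ω}).toReal := by
    set Φ : (ℝ × ℕ) × ℝ → ℝ := fun z =>
      (if ζ < z.1.1 then Real.log s / G ζ else 0) * (if ζ < z.2 then (1:ℝ) else 0) with hΦdef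
    have hΦmeas : Measurable Φ := by
      apply Measurable.mul
      · exact Measurable.ite (measurableSet_lt measurable_const
          (measurable_fst.comp measurable_fst)) measurable_const measurable_const
      · exact Measurable.ite (measurableSet_lt measurable_const measurable_snd)
          measurable_const measurable_const
    have hΦbd : ∀ z, |Φ z| ≤ |Real.log s / G ζ| := by
      intro z
      simp only [hΦdef]
      by_cases h1 : ζ < z.1.1 <;> by_cases h2 : ζ < z.2 <;>
        simp [h1, h2, abs_nonneg]
    have hpt : ∀ ω, (if ζ < T ω then Real.log s / G ζ else 0) = Φ (X ω, C ω) := by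
      intro ω
      simp only [hΦdef, hTdef, lt_min_iff]
      by_cases h1 : ζ < Tstar ω <;> by_cases h2 : ζ < C ω <;> simp [h1, h2, hXdef]
    calc ∫ ω, (if ζ < T ω then Real.log s / G ζ else 0) ∂μ
        = ∫ ω, Φ (X ω, C ω) ∂μ := by congr 1; funext ω; exact hpt ω
      _ = ∫ x, ∫ y, Φ (x, y) ∂(μ.map C) ∂(μ.map X) := key Φ _ hΦmeas hΦbd
      _ = ∫ x, (if ζ < x.1 then Real.log s / G ζ else 0) * G ζ ∂(μ.map X) := by
          congr 1; funext x; exact inner_lt _ _ (fun y => rfl)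
      _ = ∫ x, ({x : ℝ × ℕ | ζ < x.1}).indicator (fun _ => Real.log s) x ∂(μ.map X) := by
          congr 1; funext x
          by_cases h : ζ < x.1
          · have hm : x ∈ {x : ℝ × ℕ | ζ < x.1} := h
            rw [if_pos h, div_mul_cancel₀ _ hGζ.ne']
            exact (Set.indicator_of_mem hm (fun _ => Real.log s)).symm
          · have hm : x ∉ {x : ℝ × ℕ | ζ < x.1} := h
            rw [if_neg h, zero_mul]
            exact (Set.indicator_of_notMem hm (fun _ => Real.log s)).symm
      _ = Real.log s * ((μ.map X) {x : ℝ × ℕ | ζ < x.1}).toReal := by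
          rw [integral_indicator_const _ hSl, smul_eq_mul, mul_comm]
          rfl
      _ = Real.log s * (μ {ω | ζ < Tstar ω}).toReal := by
          rw [Measure.map_apply hX hSl]
          rfl
  -- integrability of each piece on μ
  have hint_k : ∀ k ∈ Finset.Icc 1 K,
      Integrable (fun ω => if T ω ≤ ζ ∧ Δobs ω = k then Real.log (p k) / G (T ω) else 0) μ := by
    intro k hk
    have hmeas : Measurable (fun ω => if T ω ≤ ζ ∧ Δobs ω = k
        then Real.log (p k) / G (T ω) else 0) := by
      apply Measurable.ite
      · exact (measurableSet_le hTm measurable_const).inter (hΔobsm (MeasurableSet.singleton k))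
      · exact measurable_const.div (hGmeas.comp hTm)
      · exact measurable_const
    refine (integrable_const (|Real.log (p k)| / G ζ)).mono' hmeas.aestronglyMeasurable ?_
    refine Filter.Eventually.of_forall (fun ω => ?_)
    simp only [Real.norm_eq_abs]
    by_cases h : T ω ≤ ζ ∧ Δobs ω = k
    · have hGt : 0 < G (T ω) := hGposle _ h.1
      rw [if_pos h, abs_div, abs_of_pos hGt]
      exact div_le_div_of_nonneg_left (abs_nonneg _) hGζ (hGanti h.1)
    · rw [if_neg h, abs_zero]
      positivity
  have hint_s : Integrable (fun ω => if ζ < T ω then Real.log s / G ζ else 0) μ := by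
    have hmeas : Measurable (fun ω => if ζ < T ω then Real.log s / G ζ else 0) :=
      Measurable.ite (measurableSet_lt measurable_const hTm) measurable_const measurable_const
    refine (integrable_const (|Real.log s / G ζ|)).mono' hmeas.aestronglyMeasurable ?_
    refine Filter.Eventually.of_forall (fun ω => ?_)
    simp only [Real.norm_eq_abs]
    by_cases h : ζ < T ω <;> simp [h, abs_nonneg]
  -- assemble
  rw [integral_add (integrable_finset_sum _ hint_k) hint_s,
    integral_finset_sum _ hint_k, term_s]
  congr 1
  exact Finset.sum_congr rfl term_k
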